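/- Let G = (V,E) be a tree (a connected acyclic undirected graph) on V = {1,…,N}. Then a configuration p = (a_1,…,a_N) is an equilibrium of the formation control system if and only if u_ij(p) = 0 for every edge (i,j) ∈ E. -/

import Mathlib

/-!
The terms `u_ij(p) • (a_i - a_j)` form an antisymmetric flow on the edges of `G`, and `p` is an
equilibrium exactly when this flow is balanced at every vertex. In a forest every edge `ij` is a
bridge: summing the balance equations over the component `S` of `i` in `G - ij`, the terms of edges
inside `S` cancel in pairs and only the flow along `ij` survives, so it vanishes. Either
`u_ij(p) = 0` or `a_i = a_j`, and in the latter case `u_ij(p) = 0` by convention.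
-/

open Finset
open scoped RealInnerProductSpace Classical

/-- The decentralized control law `u_ij(p)`. -/
noncomputable def uCtrl {n N : ℕ} (b a : Fin N → EuclideanSpace ℝ (Fin n)) (i j : Fin N) : ℝ :=
  if a j = a i then 0 else ⟪b j - b i, a j - a i⟫ / ‖a j - a i‖ ^ 2 - 1

/-- The quadratic Lyapunov function `Φ(p) = ∑ ‖a i - b i‖²`. -/
noncomputable def Phi {n N : ℕ} (b a : Fin N → EuclideanSpace ℝ (Fin n)) : ℝ :=
  ∑ i, ‖a i - b i‖ ^ 2

/-- Sum over each undirected edge of `G` exactly once. -/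
noncomputable def edgeSum {N : ℕ} (G : SimpleGraph (Fin N)) (f : Fin N → Fin N → ℝ) : ℝ :=
  ∑ p ∈ Finset.univ.filter (fun p : Fin N × Fin N => p.1 < p.2 ∧ G.Adj p.1 p.2), f p.1 p.2

/-- `p = a` is an equilibrium of the formation control system:
`∑_{j ∈ V_i} u_ij (p) • (a i - a j) = 0` for every vertex `i`. -/
noncomputable def IsEquilibrium {n N : ℕ} (G : SimpleGraph (Fin N))
    (b a : Fin N → EuclideanSpace ℝ (Fin n)) : Prop :=
  ∀ i, ∑ j ∈ Finset.univ.filter (fun j => G.Adj i j), uCtrl b a i j • (a i - a j) = 0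

lemma uCtrl_comm {n N : ℕ} (b a : Fin N → EuclideanSpace ℝ (Fin n)) (i j : Fin N) :
    uCtrl b a i j = uCtrl b a j i := by
  unfold uCtrl
  rw [← neg_sub (a j), ← neg_sub (b j), inner_neg_neg, norm_neg]
  simp only [@eq_comm _ (a j)]

namespace SimpleGraph

variable {V M : Type*} [AddCommMonoid M] {G : SimpleGraph V}

lemma sum_sum_adj_mem_eq_zero (G : SimpleGraph V) (S : Finset V) {f : V → V → M}
    (hf : ∀ u v, f u v + f v u = 0) :
    ∑ u ∈ S, ∑ v ∈ S with G.Adj u v, f u v = 0 := by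
  simp_rw [sum_filter, ← sum_product', ← sum_filter]
  refine sum_involution (fun p _ => p.swap) (fun p _ => hf p.1 p.2) (fun p hp _ h => ?_)
    (fun p hp => ?_) (fun _ _ => rfl)
  · simp only [mem_filter] at hp
    exact hp.2.ne (congrArg Prod.snd h)
  · simp only [mem_filter, mem_product] at hp ⊢
    exact ⟨hp.1.symm, hp.2.symm⟩

lemma eq_and_eq_of_adj_of_reachable_deleteEdges {i j u v : V} (huv : G.Adj u v)
    (hu : (G.deleteEdges {s(i, j)}).Reachable i u)
    (hv : ¬ (G.deleteEdges {s(i, j)}).Reachable i v) :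
    u = i ∧ v = j := by
  have huv' : s(u, v) = s(i, j) := by
    by_contra hne
    exact hv (hu.trans (deleteEdges_adj.mpr ⟨huv, by simpa using hne⟩).reachable)
  rcases Sym2.eq_iff.mp huv' with h | ⟨-, rfl⟩
  · exact h
  · exact absurd Reachable.rfl hv

variable [Fintype V]

lemma sum_sum_adj_eq_sum_sum_adj_notMem (G : SimpleGraph V) (S : Finset V) {f : V → V → M}
    (hf : ∀ u v, f u v + f v u = 0) :
    ∑ u ∈ S, ∑ v with G.Adj u v, f u v =
      ∑ u ∈ S, ∑ v with G.Adj u v ∧ v ∉ S, f u v := by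
  simp_rw [← sum_filter_add_sum_filter_not (filter (G.Adj _) univ) (· ∈ S), sum_add_distrib,
    filter_filter]
  have hS (u : V) : ({v | G.Adj u v ∧ v ∈ S} : Finset V) = {v ∈ S | G.Adj u v} := by
    ext; simp [and_comm]
  simp only [hS, sum_sum_adj_mem_eq_zero G S hf, zero_add]

theorem IsAcyclic.eq_zero_of_forall_sum_adj_eq_zero (hG : G.IsAcyclic)
    {f : V → V → M} (hf : ∀ u v, f u v + f v u = 0)
    (hbal : ∀ u, ∑ v with G.Adj u v, f u v = 0) {i j : V} (hij : G.Adj i j) : f i j = 0 := by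
  set S : Finset V := {v | (G.deleteEdges {s(i, j)}).Reachable i v}
  have hiS : i ∈ S := by simp [S]
  have hjS : j ∉ S := by
    simpa [S] using isBridge_iff.mp (isAcyclic_iff_forall_adj_isBridge.mp hG hij)
  have hcut : ∀ u ∈ S, ∀ v, G.Adj u v → v ∉ S → u = i ∧ v = j := fun u hu v huv hv =>
    eq_and_eq_of_adj_of_reachable_deleteEdges huv (by simpa [S] using hu) (by simpa [S] using hv)
  have hfrom_i : ({v | G.Adj i v ∧ v ∉ S} : Finset V) = {j} := by
    ext v
    simp only [mem_filter, mem_univ, true_and, mem_singleton]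
    exact ⟨fun ⟨hv, hvS⟩ => (hcut i hiS v hv hvS).2, by rintro rfl; exact ⟨hij, hjS⟩⟩
  calc f i j = ∑ u ∈ S, ∑ v with G.Adj u v ∧ v ∉ S, f u v := by
        rw [sum_eq_single_of_mem i hiS, hfrom_i, sum_singleton]
        intro u hu hui
        exact sum_eq_zero fun v hv => absurd (hcut u hu v (mem_filter.mp hv).2.1
          (mem_filter.mp hv).2.2).1 hui
    _ = ∑ u ∈ S, ∑ v with G.Adj u v, f u v := (sum_sum_adj_eq_sum_sum_adj_notMem G S hf).symm
    _ = 0 := sum_eq_zero fun u _ => hbal u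

end SimpleGraph

/-- If `G` is a tree, a configuration `p = a` is an equilibrium of the formation control system
iff `u_ij(p) = 0` for every edge `(i,j)` of `G`. -/
theorem tree_isEquilibrium_iff {n N : ℕ} (G : SimpleGraph (Fin N)) (hG : G.IsTree)
    (b a : Fin N → EuclideanSpace ℝ (Fin n)) :
    IsEquilibrium G b a ↔ ∀ i j, G.Adj i j → uCtrl b a i j = 0 := by
  refine ⟨fun heq i j hij => ?_, fun h i => sum_eq_zero fun j hj => ?_⟩
  · have hflow : uCtrl b a i j • (a i - a j) = 0 :=
      hG.isAcyclic.eq_zero_of_forall_sum_adj_eq_zero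
        (f := fun u v => uCtrl b a u v • (a u - a v))
        (fun u v => by rw [uCtrl_comm, ← smul_add, sub_add_sub_cancel, sub_self, smul_zero])
        heq hij
    rcases smul_eq_zero.mp hflow with hu | ha
    · exact hu
    · simp [uCtrl, (sub_eq_zero.mp ha).symm]
  · rw [h i j (mem_filter.mp hj).2, zero_smul]
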